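/- Let S be a finite set, F a finite family of subsets of S whose union is S, and define minCover(S, F) as the minimum cardinality of a subfamily of F whose union is S. If S_i ∈ F belongs to some minimum-cardinality cover of S, then minCover(S \ S_i, F \ {S_i}) = minCover(S, F) − 1. -/
import Mathlib


/-- The minimum cardinality of a subfamily of `F` whose union covers `S`. -/
noncomputable def minCover {α : Type*} [DecidableEq α]
    (S : Finset α) (F : Finset (Finset α)) : ℕ :=
  sInf {n | ∃ C ⊆ F, S ⊆ C.sup id ∧ C.card = n}

/-- If `Si` belongs to some minimum-cardinality cover of `S` by members of `F`,
then removing `Si` (and the elements it covers) decreases the minimum cover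
size by exactly one. -/
theorem minCover_erase_of_mem_min_cover {α : Type*} [DecidableEq α]
    (S : Finset α) (F : Finset (Finset α)) (hcov : S ⊆ F.sup id)
    (Si : Finset α) (hSi : Si ∈ F)
    (hmin : ∃ C ⊆ F, S ⊆ C.sup id ∧ C.card = minCover S F ∧ Si ∈ C) :
    minCover (S \ Si) (F.erase Si) = minCover S F - 1 := by
  obtain ⟨C, hCF, hCcov, hCcard, hSiC⟩ := hmin
  have hm1 : 1 ≤ minCover S F := by
    rw [← hCcard]; exact Finset.card_pos.mpr ⟨Si, hSiC⟩
  have hmemE : minCover S F - 1 ∈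
      {n | ∃ C ⊆ F.erase Si, (S \ Si) ⊆ C.sup id ∧ C.card = n} := by
    refine ⟨C.erase Si, Finset.erase_subset_erase _ hCF, ?_, ?_⟩
    · intro x hx
      rw [Finset.mem_sdiff] at hx
      have hxc := hCcov hx.1
      rw [Finset.mem_sup] at hxc ⊢
      obtain ⟨T, hT, hxT⟩ := hxc
      exact ⟨T, Finset.mem_erase.mpr ⟨fun h => hx.2 (h ▸ hxT), hT⟩, hxT⟩
    · rw [Finset.card_erase_of_mem hSiC, hCcard]
  have hub : minCover (S \ Si) (F.erase Si) ≤ minCover S F - 1 :=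
    Nat.sInf_le hmemE
  have hlb : minCover S F ≤ minCover (S \ Si) (F.erase Si) + 1 := by
    have hmem := Nat.sInf_mem ⟨_, hmemE⟩
    obtain ⟨C', hC'F, hC'cov, hC'card⟩ := hmem
    have hSinot : Si ∉ C' := fun h => Finset.notMem_erase _ _ (hC'F h)
    apply Nat.sInf_le
    refine ⟨insert Si C', ?_, ?_, ?_⟩
    · exact Finset.insert_subset hSi (hC'F.trans (Finset.erase_subset _ _))
    · intro x hx
      rw [Finset.mem_sup]
      by_cases hxSi : x ∈ Si
      · exact ⟨Si, Finset.mem_insert_self _ _, hxSi⟩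
      · have := hC'cov (Finset.mem_sdiff.mpr ⟨hx, hxSi⟩)
        rw [Finset.mem_sup] at this
        obtain ⟨T, hT, hxT⟩ := this
        exact ⟨T, Finset.mem_insert_of_mem hT, hxT⟩
    · rw [Finset.card_insert_of_notMem hSinot, hC'card]; rfl
  omega
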